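/- arXiv:1204.3071 — 3 statements merged into one kernel-verified Lean document; each statement's English description precedes it below -/
import Mathlib

section
/- Let f be a continuously differentiable interval map and ν an f-invariant Borel probability measure. If for ν-almost every x we have (1/n)·S_n(φ)(x) → A < 0 where φ = max(ln|Df|, −L) for some L > 0 and S_n(φ) = φ + φ∘f + ... + φ∘f^{n−1}, then for ν-almost every x there exist τ > 0 and N such that for all n ≥ N and all y ∈ B(x, τ) we have |Df^n(y)| ≤ exp(−nχ), where χ = −A/4. -/
/-!
Along the orbit of a Birkhoff-generic point `x`, the sums `S_n φ(x)` eventually lie below `n A / 2`.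
Replace `φ` by the continuous function `ψ = log (max |Df| e^{-L})`, which satisfies `ψ ≤ φ` and
`|Df| ≤ e^ψ`, so that `|Df^n(y)| ≤ exp S_n ψ(y)`. By uniform continuity of `ψ` on the interval, an
orbit that stays `δ`-close to the orbit of `x` has `S_n ψ(y) ≤ S_n ψ(x) + n ε`. This gives a bound
`|Df^n| ≤ M` on the set of such points that is uniform in `n`, and the mean value theorem then shows,
by induction on time, that every orbit starting within `δ / M` of `x` does stay `δ`-close.
-/

open MeasureTheory Metric Set Filter Topology

section Iterate

variable {𝕜 : Type*}

theorem deriv_iterate_eq_prod [NontriviallyNormedField 𝕜] {f : 𝕜 → 𝕜} (hf : Differentiable 𝕜 f)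
    (n : ℕ) (y : 𝕜) : deriv (f^[n]) y = ∏ i ∈ Finset.range n, deriv f (f^[i] y) := by
  induction n with
  | zero => simp
  | succ n ih =>
    rw [Function.iterate_succ', deriv_comp y hf.differentiableAt (hf.iterate n).differentiableAt,
      Finset.prod_range_succ, ih, mul_comm]

theorem dist_iterate_lt_of_norm_deriv_iterate_le [RCLike 𝕜] {f : 𝕜 → 𝕜}
    (hf : Differentiable 𝕜 f) {s : Set 𝕜} (hs : Convex ℝ s) {x : 𝕜} (hx : x ∈ s) {M δ : ℝ}
    (hM : ∀ j, ∀ y ∈ s, (∀ i < j, dist (f^[i] y) (f^[i] x) < δ) → ‖deriv f^[j] y‖ ≤ M)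
    (hs_small : ∀ y ∈ s, M * dist y x < δ) (j : ℕ) :
    ∀ y ∈ s, dist (f^[j] y) (f^[j] x) < δ := by
  induction j using Nat.strong_induction_on with
  | _ j ih =>
    intro y hy
    have hlip := hs.norm_image_sub_le_of_norm_deriv_le
      (fun z _ => (hf.iterate j).differentiableAt)
      (fun z hz => hM j z hz fun i hi => ih i hi z hz) hx hy
    rw [← dist_eq_norm, ← dist_eq_norm] at hlip
    exact hlip.trans_lt (hs_small y hy)

end Iterate

theorem birkhoffSum_le_add_of_forall_dist_lt {α : Type*} [PseudoMetricSpace α] {f : α → α}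
    {ψ : α → ℝ} {K : Set α} {δ ε : ℝ}
    (hψ : ∀ u ∈ K, ∀ v ∈ K, dist u v < δ → dist (ψ u) (ψ v) < ε) (hfK : MapsTo f K K)
    {x y : α} (hx : x ∈ K) (hy : y ∈ K) {n : ℕ}
    (hclose : ∀ i < n, dist (f^[i] y) (f^[i] x) < δ) :
    birkhoffSum f ψ n y ≤ birkhoffSum f ψ n x + n * ε := by
  have hterm : ∀ i ∈ Finset.range n, ψ (f^[i] y) ≤ ψ (f^[i] x) + ε := by
    intro i hi
    have h := hψ _ (hfK.iterate i hy) _ (hfK.iterate i hx) (hclose i (Finset.mem_range.mp hi))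
    rw [Real.dist_eq] at h
    linarith [(abs_sub_lt_iff.mp h).1]
  calc birkhoffSum f ψ n y ≤ ∑ i ∈ Finset.range n, (ψ (f^[i] x) + ε) := Finset.sum_le_sum hterm
    _ = birkhoffSum f ψ n x + n * ε := by
      rw [Finset.sum_add_distrib, Finset.sum_const, Finset.card_range, nsmul_eq_mul]; rfl

theorem birkhoffSum_le_of_forall_le {α : Type*} {f : α → α} {ψ : α → ℝ} {K : Set α} {C : ℝ}
    (hψ : ∀ z ∈ K, ψ z ≤ C) (hfK : MapsTo f K K) {y : α} (hy : y ∈ K) (n : ℕ) :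
    birkhoffSum f ψ n y ≤ n * C := by
  simpa [birkhoffSum] using
    Finset.sum_le_card_nsmul (Finset.range n) _ _ fun i _ => hψ _ (hfK.iterate i hy)

theorem eventually_birkhoffSum_le_of_tendsto_birkhoffAverage {α : Type*} {f : α → α}
    {g : α → ℝ} {x : α} {A c : ℝ}
    (h : Tendsto (fun n => birkhoffAverage ℝ f g n x) atTop (𝓝 A)) (hAc : A < c) :
    ∀ᶠ n : ℕ in atTop, birkhoffSum f g n x ≤ n * c := by
  filter_upwards [h.eventually_lt_const hAc, eventually_ge_atTop 1] with n hn hn1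
  rw [birkhoffAverage, smul_eq_mul, inv_mul_lt_iff₀ (by exact_mod_cast hn1)] at hn
  exact hn.le

theorem abs_deriv_iterate_le_exp_birkhoffSum {f ψ : ℝ → ℝ} (hf : Differentiable ℝ f) {K : Set ℝ}
    (hfK : MapsTo f K K) (hdf : ∀ z ∈ K, |deriv f z| ≤ Real.exp (ψ z)) {y : ℝ} (hy : y ∈ K)
    (n : ℕ) : |deriv f^[n] y| ≤ Real.exp (birkhoffSum f ψ n y) := by
  rw [deriv_iterate_eq_prod hf, Finset.abs_prod, birkhoffSum, Real.exp_sum]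
  exact Finset.prod_le_prod (fun i _ => abs_nonneg _) fun i _ => hdf _ (hfK.iterate i hy)

theorem exists_ball_abs_deriv_iterate_le {f ψ : ℝ → ℝ} {K : Set ℝ} (hK : IsCompact K)
    (hK_conv : Convex ℝ K) (hfK : MapsTo f K K) (hf : Differentiable ℝ f) (hψ : ContinuousOn ψ K)
    (hdf : ∀ z ∈ K, |deriv f z| ≤ Real.exp (ψ z)) {x : ℝ} (hx : x ∈ K) {c ε : ℝ} (hε : 0 < ε)
    (hcε : c + ε ≤ 0) (hsum : ∀ᶠ n : ℕ in atTop, birkhoffSum f ψ n x ≤ n * c) :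
    ∃ τ > 0, ∀ᶠ n : ℕ in atTop, ∀ y ∈ ball x τ ∩ K,
      |deriv f^[n] y| ≤ Real.exp (n * (c + ε)) := by
  obtain ⟨δ, hδ, hψδ⟩ :=
    uniformContinuousOn_iff.mp (hK.uniformContinuousOn_of_continuous hψ) ε hε
  obtain ⟨C, hC⟩ := hK.exists_bound_of_continuousOn hψ
  have hψC : ∀ z ∈ K, ψ z ≤ C := fun z hz => (le_abs_self _).trans (hC z hz)
  have hC0 : 0 ≤ C := (norm_nonneg _).trans (hC x hx)
  obtain ⟨N, hN⟩ := eventually_atTop.mp hsum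
  have hshadow : ∀ n ≥ N, ∀ y ∈ K, (∀ i < n, dist (f^[i] y) (f^[i] x) < δ) →
      birkhoffSum f ψ n y ≤ n * (c + ε) := fun n hn y hy hclose => by
    linarith [birkhoffSum_le_add_of_forall_dist_lt hψδ hfK hx hy hclose, hN n hn]
  -- Before time `N` use `ψ ≤ C`, afterwards the sums are negative: `exp (N C)` bounds `|Df^n|`.
  set M := Real.exp (N * C)
  have hM : ∀ n, ∀ y ∈ ball x (δ / M) ∩ K, (∀ i < n, dist (f^[i] y) (f^[i] x) < δ) →
      ‖deriv f^[n] y‖ ≤ M := fun n y hy hclose => by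
    refine (abs_deriv_iterate_le_exp_birkhoffSum hf hfK hdf hy.2 n).trans (Real.exp_le_exp.mpr ?_)
    rcases le_total n N with hnN | hNn
    · exact (birkhoffSum_le_of_forall_le hψC hfK hy.2 n).trans (by gcongr)
    · nlinarith [hshadow n hNn y hy.2 hclose, (n.cast_nonneg : (0 : ℝ) ≤ n)]
  have hclose := dist_iterate_lt_of_norm_deriv_iterate_le hf ((convex_ball x _).inter hK_conv)
    ⟨mem_ball_self (by positivity), hx⟩ hM fun y hy => by
      have := mem_ball.mp hy.1
      rwa [lt_div_iff₀' (Real.exp_pos _)] at this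
  refine ⟨δ / M, by positivity, eventually_atTop.mpr ⟨N, fun n hn y hy => ?_⟩⟩
  exact (abs_deriv_iterate_le_exp_birkhoffSum hf hfK hdf hy.2 n).trans <| Real.exp_le_exp.mpr <|
    hshadow n hn y hy.2 fun i _ => hclose i y hy

theorem le_exp_log_max_exp (t s : ℝ) : t ≤ Real.exp (Real.log (max t (Real.exp s))) := by
  rw [Real.exp_log (lt_max_of_lt_right (Real.exp_pos s))]
  exact le_max_left _ _

theorem log_max_exp_le_max_log (t s : ℝ) : Real.log (max t (Real.exp s)) ≤ max (Real.log t) s := by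
  rcases le_total t (Real.exp s) with h | h
  · rw [max_eq_right h, Real.log_exp]; exact le_max_right _ _
  · rw [max_eq_left h]; exact le_max_left _ _

theorem birkhoff_neg_implies_local_contraction_general
    (a b : ℝ) (f : ℝ → ℝ)
    (hf : ContDiff ℝ 1 f) (hmaps : MapsTo f (Icc a b) (Icc a b))
    (ν : Measure ℝ) (hsupp : ν (Icc a b)ᶜ = 0)
    (L : ℝ) (A : ℝ) (hA : A < 0)
    (hbirk : ∀ᵐ x ∂ν, Tendsto
      (fun n : ℕ => (1 / (n : ℝ)) *
        ∑ i ∈ Finset.range n, max (Real.log |deriv f (f^[i] x)|) (-L))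
      atTop (nhds A)) :
    ∀ᵐ x ∂ν, ∃ τ > (0 : ℝ), ∃ N : ℕ, ∀ n ≥ N, ∀ y ∈ Metric.ball x τ ∩ Icc a b,
      |deriv (f^[n]) y| ≤ Real.exp (-(n : ℝ) * (-A / 4)) := by
  -- `ψ` is a continuous version of `φ`, which jumps at zeros of `Df` since `log 0 = 0`.
  set ψ : ℝ → ℝ := fun z => Real.log (max |deriv f z| (Real.exp (-L)))
  have hψ : Continuous ψ := ((hf.continuous_deriv le_rfl).abs.max continuous_const).log
    fun z => (lt_max_of_lt_right (Real.exp_pos _)).ne'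
  have hae : ∀ᵐ x ∂ν, x ∈ Icc a b := measure_eq_zero_iff_ae_notMem.mp hsupp |>.mono fun _ h => by
    simpa using h
  filter_upwards [hbirk, hae] with x hx hxK
  have hsum : ∀ᶠ n : ℕ in atTop, birkhoffSum f ψ n x ≤ n * (A / 2) := by
    filter_upwards [eventually_birkhoffSum_le_of_tendsto_birkhoffAverage
      (f := f) (g := fun z => max (Real.log |deriv f z|) (-L)) (x := x)
      (by simpa only [birkhoffAverage, birkhoffSum, one_div, smul_eq_mul] using hx)
      (by linarith : A < A / 2)] with n hn
    exact (Finset.sum_le_sum fun i _ => log_max_exp_le_max_log _ _).trans hn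
  obtain ⟨τ, hτ, hcontr⟩ := exists_ball_abs_deriv_iterate_le isCompact_Icc (convex_Icc a b) hmaps
    (hf.differentiable one_ne_zero) hψ.continuousOn (fun z _ => le_exp_log_max_exp _ _) hxK
    (by linarith : 0 < -A / 4) (by linarith) hsum
  obtain ⟨N, hN⟩ := eventually_atTop.mp hcontr
  exact ⟨τ, hτ, N, fun n hn y hy => (hN n hn y hy).trans_eq (by ring_nf)⟩

/-- If the Birkhoff averages of `φ = max(ln|Df|, -L)` converge ν-a.e. to
`A = ∫ φ dν < 0`, then ν-a.e. point `x` admits `τ > 0` and `N` such that for all `n ≥ N`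
and all `y` in the ball `B(x,τ)` (inside the interval) we have `|Df^n(y)| ≤ exp(-nχ)`
with `χ = -A/4`. -/
theorem birkhoff_neg_implies_local_contraction
    (a b : ℝ) (hab : a < b) (f : ℝ → ℝ)
    (hf : ContDiff ℝ 1 f) (hmaps : MapsTo f (Icc a b) (Icc a b))
    (ν : Measure ℝ) (hprob : IsProbabilityMeasure ν) (hsupp : ν (Icc a b)ᶜ = 0)
    (hinv : MeasurePreserving f ν ν)
    (L : ℝ) (hL : 0 < L) (A : ℝ) (hA : A < 0)
    (hAint : A = ∫ x, max (Real.log |deriv f x|) (-L) ∂ν)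
    (hbirk : ∀ᵐ x ∂ν, Tendsto
      (fun n : ℕ => (1 / (n : ℝ)) *
        ∑ i ∈ Finset.range n, max (Real.log |deriv f (f^[i] x)|) (-L))
      atTop (nhds A)) :
    ∀ᵐ x ∂ν, ∃ τ > (0 : ℝ), ∃ N : ℕ, ∀ n ≥ N, ∀ y ∈ Metric.ball x τ ∩ Icc a b,
      |deriv (f^[n]) y| ≤ Real.exp (-(n : ℝ) * (-A / 4)) :=
  birkhoff_neg_implies_local_contraction_general a b f hf hmaps ν hsupp L A hA hbirk
end

section
/- Let f be an interval map of class C³ with non-flat critical points whose Julia set is completely invariant, and suppose f is topologically exact on its Julia set J(f). If p is a hyperbolic repelling periodic point of f in J(f) with Lyapunov exponent χ_p(f), then for every interval J ⊆ I intersecting J(f): liminf_{n→∞} (1/n) ln max{|W| : W a connected component of f^{−n}(J)} ≥ −χ_p(f). -/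
open Metric Set Filter

/-- The supremum of the diameters (lengths) of the connected components of `f^{-n}(J)`. -/
noncomputable def pullbackDiamSup (f : ℝ → ℝ) (J : Set ℝ) (n : ℕ) : ℝ :=
  sSup ((fun w => Metric.diam (connectedComponentIn (f^[n] ⁻¹' J) w)) '' (f^[n] ⁻¹' J))

/-!
Exactness forces `J(f) = [a, b]`, so all pull-backs of `J` stay in `[a, b]` and `f` maps `[a, b]`
onto itself. Near the repelling point `p`, the return map `g = f^ℓ` is monotone on a small ball
`B ∋ p`, covers `B`, and is `Λ`-Lipschitz there for any `Λ > |g'(p)|`; hence every interval in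
`B` has a preimage interval in `B` shorter by at most the factor `Λ`. Exactness gives, for each
residue `j < ℓ`, an interval in `B` carried into `J` by `f^(j+m)`; pulling it back `k` times along
`g` yields a component of `f^{-(j+m+ℓk)}(J)` of length at least `c Λ^{-k}`, so the liminf is at
least `-(1/ℓ) log Λ`. When `J` is a point, non-flatness makes every component a point, and all the
terms are `log 0 = 0` (Mathlib's junk value).
-/

open Bornology Topology

lemma eq_of_exact_of_preimage_eq {X : Type*} [TopologicalSpace X] {f : X → X} {K I : Set X}
    (hKI : K ⊆ I) (hinv : f ⁻¹' K = K) (hK : K.Nonempty)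
    (hexact : ∀ U : Set X, IsOpen U → (U ∩ K).Nonempty → ∃ n : ℕ, f^[n] '' (U ∩ I) = K) :
    K = I := by
  obtain ⟨n, hn⟩ := hexact univ isOpen_univ (by rwa [univ_inter])
  refine hKI.antisymm fun x hx => ?_
  rw [← (Function.IsFixedPt.preimage_iterate hinv n).eq, mem_preimage, ← hn]
  exact mem_image_of_mem _ ⟨mem_univ x, hx⟩

lemma surjOn_of_exact {X : Type*} [TopologicalSpace X] [T1Space X] {f : X → X} {I : Set X}
    (hI : I.Nontrivial) (hmaps : MapsTo f I I)
    (hexact : ∀ U : Set X, IsOpen U → (U ∩ I).Nonempty → ∃ n : ℕ, f^[n] '' (U ∩ I) = I) :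
    SurjOn f I I := by
  obtain ⟨x, hx, y, hy, hxy⟩ := hI
  obtain ⟨n, hn⟩ := hexact {x}ᶜ isOpen_compl_singleton ⟨y, hxy.symm, hy⟩
  cases n with
  | zero =>
    rw [Function.iterate_zero, image_id] at hn
    exact absurd rfl (hn ▸ hx).1
  | succ n =>
    calc I = f '' (f^[n] '' ({x}ᶜ ∩ I)) := by rw [← image_comp, ← Function.iterate_succ', hn]
      _ ⊆ f '' I := image_mono ((hmaps.iterate n).mono_left inter_subset_right).image_subset

def NowhereConstantOn (f : ℝ → ℝ) (I : Set ℝ) : Prop :=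
  ∀ ⦃y z : ℝ⦄, y < z → Icc y z ⊆ I → (f '' Icc y z).Nontrivial

lemma nowhereConstantOn_of_nonflat {f : ℝ → ℝ} {I : Set ℝ}
    (hnonflat : ∀ c ∈ I, deriv f c = 0 → ∃ k : ℕ, 2 ≤ k ∧ iteratedDeriv k f c ≠ 0) :
    NowhereConstantOn f I := by
  intro y z hyz hsub
  by_contra hconst
  rw [not_nontrivial_iff] at hconst
  have hc : (y + z) / 2 ∈ Ioo y z := ⟨by linarith, by linarith⟩
  have hloc : f =ᶠ[𝓝 ((y + z) / 2)] fun _ => f ((y + z) / 2) :=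
    Filter.eventually_of_mem (Ioo_mem_nhds hc.1 hc.2) fun u hu =>
      hconst (mem_image_of_mem f (Ioo_subset_Icc_self hu))
        (mem_image_of_mem f (Ioo_subset_Icc_self hc))
  obtain ⟨k, hk, hne⟩ := hnonflat _ (hsub (Ioo_subset_Icc_self hc))
    (by rw [hloc.deriv_eq, deriv_const])
  rw [hloc.iteratedDeriv_eq, iteratedDeriv_const, if_neg (by omega)] at hne
  exact hne rfl

lemma NowhereConstantOn.iterate {f : ℝ → ℝ} {I : Set ℝ} (h : NowhereConstantOn f I)
    (hf : Continuous f) (hmaps : MapsTo f I I) (n : ℕ) : NowhereConstantOn f^[n] I := by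
  induction n with
  | zero =>
    intro y z hyz _
    rw [Function.iterate_zero, image_id]
    exact ⟨y, left_mem_Icc.2 hyz.le, z, right_mem_Icc.2 hyz.le, hyz.ne⟩
  | succ n ih =>
    intro y z hyz hsub
    obtain ⟨u, hu, v, hv, huv⟩ := (h hyz hsub).exists_lt
    have hIcc : Icc u v ⊆ f '' Icc y z :=
      (isPreconnected_Icc.image f hf.continuousOn).Icc_subset hu hv
    rw [Function.iterate_succ, image_comp]
    exact (ih huv (hIcc.trans ((image_mono hsub).trans hmaps.image_subset))).mono
      (image_mono hIcc)

section pullbackDiamSup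

variable {f : ℝ → ℝ} {J : Set ℝ} {n : ℕ}

lemma pullbackDiamSup_nonneg : 0 ≤ pullbackDiamSup f J n :=
  Real.sSup_nonneg <| by rintro _ ⟨w, -, rfl⟩; exact diam_nonneg

lemma pullbackDiamSup_le_diam (hJ : IsBounded (f^[n] ⁻¹' J)) :
    pullbackDiamSup f J n ≤ diam (f^[n] ⁻¹' J) :=
  Real.sSup_le (by rintro _ ⟨w, -, rfl⟩; exact diam_mono (connectedComponentIn_subset _ _) hJ)
    diam_nonneg

lemma dist_le_pullbackDiamSup (hJ : IsBounded (f^[n] ⁻¹' J)) {s t : ℝ}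
    (h : MapsTo f^[n] (uIcc s t) J) : dist s t ≤ pullbackDiamSup f J n := by
  have hsub : uIcc s t ⊆ connectedComponentIn (f^[n] ⁻¹' J) s :=
    isPreconnected_uIcc.subset_connectedComponentIn left_mem_uIcc h
  have hbdd : BddAbove ((fun w => diam (connectedComponentIn (f^[n] ⁻¹' J) w)) '' (f^[n] ⁻¹' J)) :=
    ⟨_, by rintro _ ⟨w, -, rfl⟩; exact diam_mono (connectedComponentIn_subset _ _) hJ⟩
  exact (dist_le_diam_of_mem (hJ.subset (connectedComponentIn_subset _ _))
    (hsub left_mem_uIcc) (hsub right_mem_uIcc)).trans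
    (le_csSup hbdd ⟨s, h left_mem_uIcc, rfl⟩)

lemma pullbackDiamSup_eq_zero_of_subsingleton {I : Set ℝ} (hJ : J.Subsingleton)
    (hpre : f^[n] ⁻¹' J ⊆ I) (hf : NowhereConstantOn f^[n] I) : pullbackDiamSup f J n = 0 := by
  refine le_antisymm (Real.sSup_nonpos ?_) pullbackDiamSup_nonneg
  rintro _ ⟨w, -, rfl⟩
  have hlt : ∀ y ∈ connectedComponentIn (f^[n] ⁻¹' J) w,
      ∀ z ∈ connectedComponentIn (f^[n] ⁻¹' J) w, ¬ y < z := fun y hy z hz hyz => by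
    have hIcc := (isPreconnected_connectedComponentIn.Icc_subset hy hz).trans
      (connectedComponentIn_subset _ _)
    exact (hf hyz (hIcc.trans hpre)).not_subsingleton (hJ.anti (image_subset_iff.mpr hIcc))
  exact (diam_subsingleton fun y hy z hz =>
    le_antisymm (not_lt.1 (hlt z hz y hy)) (not_lt.1 (hlt y hy z hz))).le

end pullbackDiamSup

lemma isBoundedUnder_inv_mul_log {S : ℕ → ℝ} {D : ℝ} (hS₀ : ∀ n, 0 ≤ S n) (hSD : ∀ n, S n ≤ D) :
    IsBoundedUnder (· ≤ ·) atTop fun n : ℕ => (1 / (n : ℝ)) * Real.log (S n) := by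
  refine isBoundedUnder_of ⟨max 0 D, fun n => ?_⟩
  have hn : 1 / (n : ℝ) ≤ 1 := by
    rcases n.eq_zero_or_pos with rfl | hn
    · simp
    · exact div_le_one_of_le₀ (by exact_mod_cast hn) n.cast_nonneg
  rcases le_total (Real.log (S n)) 0 with hlog | hlog
  · exact (mul_nonpos_of_nonneg_of_nonpos (by positivity) hlog).trans (le_max_left _ _)
  · exact (mul_le_of_le_one_left hlog hn).trans
      (((Real.log_le_self (hS₀ n)).trans (hSD n)).trans (le_max_right _ _))

lemma neg_inv_mul_log_le_liminf {S : ℕ → ℝ} {c Λ D : ℝ} {ℓ : ℕ} (hc : 0 < c) (hΛ : 1 ≤ Λ)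
    (hS₀ : ∀ n, 0 ≤ S n) (hSD : ∀ n, S n ≤ D) (hlow : ∀ᶠ n in atTop, c ≤ Λ ^ (n / ℓ) * S n) :
    -((1 / (ℓ : ℝ)) * Real.log Λ) ≤
      liminf (fun n : ℕ => (1 / (n : ℝ)) * Real.log (S n)) atTop := by
  have hlim : Tendsto (fun n : ℕ => Real.log c / n - (1 / (ℓ : ℝ)) * Real.log Λ) atTop
      (𝓝 (-((1 / (ℓ : ℝ)) * Real.log Λ))) := by
    simpa using (tendsto_const_div_atTop_nhds_zero_nat (Real.log c)).sub_const
      ((1 / (ℓ : ℝ)) * Real.log Λ)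
  rw [← hlim.liminf_eq]
  refine liminf_le_liminf ?_ hlim.isBoundedUnder_ge
    (isBoundedUnder_inv_mul_log hS₀ hSD).isCoboundedUnder_ge
  filter_upwards [hlow, eventually_gt_atTop 0] with n hn hn₀
  have hSpos : 0 < S n := pos_of_mul_pos_right (hc.trans_le hn) (by positivity)
  have hlog : Real.log c ≤ (n / ℓ : ℕ) * Real.log Λ + Real.log (S n) := by
    have := Real.log_le_log hc hn
    rwa [Real.log_mul (by positivity) hSpos.ne', Real.log_pow] at this
  have hdiv : ((n / ℓ : ℕ) : ℝ) * Real.log Λ ≤ (n / ℓ : ℝ) * Real.log Λ :=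
    mul_le_mul_of_nonneg_right Nat.cast_div_le (Real.log_nonneg hΛ)
  have hn' : (0 : ℝ) < n := by exact_mod_cast hn₀
  calc Real.log c / n - (1 / (ℓ : ℝ)) * Real.log Λ
      = (1 / (n : ℝ)) * (Real.log c - (n / ℓ : ℝ) * Real.log Λ) := by
        field_simp
    _ ≤ (1 / (n : ℝ)) * Real.log (S n) := by gcongr; linarith

structure IsCoveringBranch (g : ℝ → ℝ) (T : Set ℝ) (Λ : ℝ) : Prop where
  monotoneOn_or_antitoneOn : MonotoneOn g T ∨ AntitoneOn g T
  subset_image : T ⊆ g '' T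
  abs_sub_le : ∀ x ∈ T, ∀ y ∈ T, |g x - g y| ≤ Λ * |x - y|

namespace IsCoveringBranch

variable {g : ℝ → ℝ} {T : Set ℝ} {Λ : ℝ}

lemma exists_uIcc_mapsTo_uIcc (hg : IsCoveringBranch g T Λ) (hT : T.OrdConnected)
    {s t : ℝ} (hs : s ∈ T) (ht : t ∈ T) :
    ∃ s' ∈ T, ∃ t' ∈ T, MapsTo g (uIcc s' t') (uIcc s t) ∧ |t - s| ≤ Λ * |t' - s'| := by
  obtain ⟨s', hs', rfl⟩ := hg.subset_image hs
  obtain ⟨t', ht', rfl⟩ := hg.subset_image ht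
  have hsub := hT.uIcc_subset hs' ht'
  refine ⟨s', hs', t', ht', fun x hx => ?_, hg.abs_sub_le t' ht' s' hs'⟩
  rcases hg.monotoneOn_or_antitoneOn with h | h
  · exact (h.mono hsub).image_uIcc_subset (mem_image_of_mem g hx)
  · exact (h.mono hsub).image_uIcc_subset (mem_image_of_mem g hx)

lemma exists_uIcc_mapsTo_uIcc_iterate (hg : IsCoveringBranch g T Λ) (hT : T.OrdConnected)
    (hΛ : 0 ≤ Λ) {s t : ℝ} (hs : s ∈ T) (ht : t ∈ T) (k : ℕ) :
    ∃ s' ∈ T, ∃ t' ∈ T, MapsTo g^[k] (uIcc s' t') (uIcc s t) ∧ |t - s| ≤ Λ ^ k * |t' - s'| := by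
  induction k with
  | zero => exact ⟨s, hs, t, ht, mapsTo_id _, by simp⟩
  | succ k ih =>
    obtain ⟨s₁, hs₁, t₁, ht₁, hmaps₁, hlen₁⟩ := ih
    obtain ⟨s', hs', t', ht', hmaps', hlen'⟩ := hg.exists_uIcc_mapsTo_uIcc hT hs₁ ht₁
    refine ⟨s', hs', t', ht', ?_, ?_⟩
    · rw [Function.iterate_succ]
      exact hmaps₁.comp hmaps'
    · calc |t - s| ≤ Λ ^ k * |t₁ - s₁| := hlen₁
        _ ≤ Λ ^ k * (Λ * |t' - s'|) := by gcongr
        _ = Λ ^ (k + 1) * |t' - s'| := by ring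

end IsCoveringBranch

lemma ContDiff.iterate {𝕜 E : Type*} [NontriviallyNormedField 𝕜] [NormedAddCommGroup E]
    [NormedSpace 𝕜 E] {n : WithTop ℕ∞} {f : E → E} (hf : ContDiff 𝕜 n f) :
    ∀ k : ℕ, ContDiff 𝕜 n f^[k]
  | 0 => contDiff_id
  | k + 1 => (ContDiff.iterate hf k).comp hf

lemma exists_closedBall_deriv_bounds {g : ℝ → ℝ} {p Λ : ℝ} (hg : Continuous (deriv g))
    (h1 : 1 < |deriv g p|) (hΛ : |deriv g p| < Λ) :
    ∃ δ > 0, ((∀ x ∈ closedBall p δ, 1 ≤ deriv g x) ∨ (∀ x ∈ closedBall p δ, deriv g x ≤ -1)) ∧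
      ∀ x ∈ closedBall p δ, |deriv g x| ≤ Λ := by
  obtain ⟨δ, hδ, hnear⟩ := Metric.nhds_basis_closedBall.eventually_iff.mp <|
    hg.continuousAt.eventually (ball_mem_nhds (deriv g p)
      (lt_min (sub_pos.2 h1) (sub_pos.2 hΛ) : 0 < min (|deriv g p| - 1) (Λ - |deriv g p|)))
  have hnear' : ∀ x ∈ closedBall p δ, |deriv g x - deriv g p| < |deriv g p| - 1 ∧
      |deriv g x - deriv g p| < Λ - |deriv g p| := fun x hx => by
    simpa [Real.dist_eq] using hnear hx
  refine ⟨δ, hδ, ?_, fun x hx => ?_⟩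
  · rcases le_or_gt 0 (deriv g p) with hp | hp
    · refine Or.inl fun x hx => ?_
      have := (hnear' x hx).1
      rw [abs_of_nonneg hp] at this
      linarith [neg_abs_le (deriv g x - deriv g p)]
    · refine Or.inr fun x hx => ?_
      have := (hnear' x hx).1
      rw [abs_of_neg hp] at this
      linarith [le_abs_self (deriv g x - deriv g p)]
  · linarith [(hnear' x hx).2, abs_sub_abs_le_abs_sub (deriv g x) (deriv g p)]

lemma exists_isCoveringBranch_closedBall {g : ℝ → ℝ} {p Λ : ℝ} (hg : ContDiff ℝ 1 g)
    (hp : g p = p) (h1 : 1 < |deriv g p|) (hΛ : |deriv g p| < Λ) :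
    ∃ δ > 0, IsCoveringBranch g (closedBall p δ) Λ := by
  obtain ⟨δ, hδ, hsign, hbound⟩ := exists_closedBall_deriv_bounds (hg.continuous_deriv le_rfl) h1 hΛ
  have hd : Differentiable ℝ g := hg.differentiable one_ne_zero
  have hB : Convex ℝ (closedBall p δ) := convex_closedBall p δ
  have hcont : ContinuousOn g (closedBall p δ) := hd.continuous.continuousOn
  have hdiff : DifferentiableOn ℝ g (interior (closedBall p δ)) := hd.differentiableOn
  have hmem : p - δ ∈ closedBall p δ ∧ p ∈ closedBall p δ ∧ p + δ ∈ closedBall p δ := by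
    simp only [Real.closedBall_eq_Icc, mem_Icc]
    refine ⟨⟨?_, ?_⟩, ⟨?_, ?_⟩, ⟨?_, ?_⟩⟩ <;> linarith
  have hIVT : uIcc (g (p - δ)) (g (p + δ)) ⊆ g '' closedBall p δ := by
    rw [Real.closedBall_eq_Icc, ← uIcc_of_le (by linarith)]
    exact intermediate_value_uIcc (by rwa [uIcc_of_le (by linarith), ← Real.closedBall_eq_Icc])
  refine ⟨δ, hδ, ⟨?_, ?_, fun x hx y hy => ?_⟩⟩
  · rcases hsign with h | h
    · exact Or.inl (monotoneOn_of_deriv_nonneg hB hcont hdiff fun x hx =>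
        zero_le_one.trans (h x (interior_subset hx)))
    · exact Or.inr (antitoneOn_of_deriv_nonpos hB hcont hdiff fun x hx =>
        (h x (interior_subset hx)).trans (by norm_num))
  · refine Subset.trans ?_ hIVT
    rw [Real.closedBall_eq_Icc]
    rcases hsign with h | h
    · have := hB.mul_sub_le_image_sub_of_le_deriv hcont hdiff fun x hx => h x (interior_subset hx)
      refine (Icc_subset_Icc ?_ ?_).trans Icc_subset_uIcc
      · linarith [this _ hmem.1 _ hmem.2.1 (by linarith)]
      · linarith [this _ hmem.2.1 _ hmem.2.2 (by linarith)]
    · have := hB.image_sub_le_mul_sub_of_deriv_le hcont hdiff fun x hx => h x (interior_subset hx)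
      refine (Icc_subset_Icc ?_ ?_).trans Icc_subset_uIcc'
      · linarith [this _ hmem.2.1 _ hmem.2.2 (by linarith)]
      · linarith [this _ hmem.1 _ hmem.2.1 (by linarith)]
  · simpa only [Real.norm_eq_abs] using
      hB.norm_image_sub_le_of_norm_deriv_le (fun z _ => hd z) (fun z hz => hbound z hz) hy hx

lemma exists_uIcc_mapsTo_of_surjOn {h : ℝ → ℝ} (hh : Continuous h) {U J : Set ℝ} (hU : IsOpen U)
    (hJ : J.OrdConnected) (hJnt : J.Nontrivial) (hsurj : SurjOn h U J) :
    ∃ s ∈ U, ∃ t ∈ U, s ≠ t ∧ MapsTo h (uIcc s t) J := by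
  obtain ⟨q₁, hq₁, q₂, hq₂, hq⟩ := hJnt.exists_lt
  obtain ⟨y, hy⟩ := exists_between hq
  obtain ⟨x, hxU, rfl⟩ := hsurj (hJ.out hq₁ hq₂ ⟨hy.1.le, hy.2.le⟩)
  obtain ⟨ε, hε, hball⟩ := Metric.nhds_basis_closedBall.mem_iff.mp
    ((hU.inter (isOpen_Ioo.preimage hh)).mem_nhds ⟨hxU, hy⟩)
  rw [Real.closedBall_eq_Icc, ← uIcc_of_le (by linarith)] at hball
  exact ⟨x - ε, (hball left_mem_uIcc).1, x + ε, (hball right_mem_uIcc).1, by linarith,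
    fun z hz => hJ.out hq₁ hq₂ (Ioo_subset_Icc_self (hball hz).2)⟩

lemma exists_pos_le_pow_mul_pullbackDiamSup {f : ℝ → ℝ} {J T U : Set ℝ} {ℓ m : ℕ} {Λ : ℝ}
    (hf : Continuous f) (hℓ : 0 < ℓ) (hΛ : 1 ≤ Λ) (hbranch : IsCoveringBranch f^[ℓ] T Λ)
    (hT : T.OrdConnected) (hU : IsOpen U) (hUT : U ⊆ T) (hJ : J.OrdConnected) (hJnt : J.Nontrivial)
    (hsurj : ∀ j, SurjOn f^[j + m] U J) (hbdd : ∀ n, IsBounded (f^[n] ⁻¹' J)) :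
    ∃ c > 0, ∀ᶠ n in atTop, c ≤ Λ ^ (n / ℓ) * pullbackDiamSup f J n := by
  choose s hs t ht hst hmaps using fun j =>
    exists_uIcc_mapsTo_of_surjOn (hf.iterate (j + m)) hU hJ hJnt (hsurj j)
  have : Nonempty (Fin ℓ) := ⟨⟨0, hℓ⟩⟩
  obtain ⟨j₀, hj₀⟩ := Finite.exists_min fun j : Fin ℓ => |t j - s j|
  refine ⟨_, abs_pos.2 (sub_ne_zero.2 (hst j₀).symm), eventually_atTop.2 ⟨m, fun n hn => ?_⟩⟩
  obtain ⟨j, k, hj, rfl⟩ : ∃ j k, j < ℓ ∧ n = j + m + ℓ * k :=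
    ⟨(n - m) % ℓ, (n - m) / ℓ, Nat.mod_lt _ hℓ, by have := Nat.mod_add_div (n - m) ℓ; omega⟩
  obtain ⟨s', -, t', -, hmaps', hlen⟩ :=
    hbranch.exists_uIcc_mapsTo_uIcc_iterate hT (by linarith) (hUT (hs j)) (hUT (ht j)) k
  have hdist : dist s' t' ≤ pullbackDiamSup f J (j + m + ℓ * k) := by
    refine dist_le_pullbackDiamSup (hbdd _) ?_
    rw [Function.iterate_add, Function.iterate_mul]
    exact (hmaps j).comp hmaps'
  have hk : k ≤ (j + m + ℓ * k) / ℓ := (Nat.le_div_iff_mul_le hℓ).2 (by nlinarith)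
  calc |t j₀ - s j₀| ≤ |t j - s j| := hj₀ ⟨j, hj⟩
    _ ≤ Λ ^ k * dist s' t' := by rwa [Real.dist_eq, abs_sub_comm s']
    _ ≤ Λ ^ ((j + m + ℓ * k) / ℓ) * pullbackDiamSup f J (j + m + ℓ * k) := by
      gcongr

theorem liminf_component_diam_ge_neg_periodic_exponent_general
    (a b : ℝ) (f : ℝ → ℝ)
    (hf : ContDiff ℝ 3 f) (hmaps : MapsTo f (Icc a b) (Icc a b))
    (hnonflat : ∀ c ∈ Icc a b, deriv f c = 0 → ∃ k : ℕ, 2 ≤ k ∧ iteratedDeriv k f c ≠ 0)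
    (Jf : Set ℝ) (hJfI : Jf ⊆ Icc a b) (hJfinv : f ⁻¹' Jf = Jf)
    (hJfnt : ¬ Jf.Subsingleton)
    (hexact : ∀ U : Set ℝ, IsOpen U → (U ∩ Jf).Nonempty →
      ∃ n : ℕ, f^[n] '' (U ∩ Icc a b) = Jf)
    (p : ℝ) (hp : p ∈ Jf) (ℓ : ℕ) (hℓ : 1 ≤ ℓ) (hper : f^[ℓ] p = p)
    (hrep : 1 < |deriv (f^[ℓ]) p|) :
    ∀ J : Set ℝ, J ⊆ Icc a b → J.OrdConnected → (J ∩ Jf).Nonempty →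
      -( (1 / (ℓ : ℝ)) * Real.log |deriv (f^[ℓ]) p| ) ≤
        Filter.liminf (fun n : ℕ => (1 / (n : ℝ)) * Real.log (pullbackDiamSup f J n))
          Filter.atTop := by
  intro J hJI hJoc _
  obtain rfl : Jf = Icc a b := eq_of_exact_of_preimage_eq hJfI hJfinv ⟨p, hp⟩ hexact
  have hpre : ∀ n, f^[n] ⁻¹' J ⊆ Icc a b := fun n =>
    (preimage_mono hJI).trans (Function.IsFixedPt.preimage_iterate hJfinv n).le
  have hbdd : ∀ n, IsBounded (f^[n] ⁻¹' J) := fun n => (isBounded_Icc a b).subset (hpre n)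
  rcases J.subsingleton_or_nontrivial with hJ | hJ
  · have h0 : ∀ n, pullbackDiamSup f J n = 0 := fun n =>
      pullbackDiamSup_eq_zero_of_subsingleton hJ (hpre n)
        ((nowhereConstantOn_of_nonflat hnonflat).iterate hf.continuous hmaps n)
    simp only [h0, Real.log_zero, mul_zero, liminf_const, neg_nonpos]
    exact mul_nonneg (by positivity) (Real.log_nonneg hrep.le)
  refine le_of_forall_sub_le fun ε hε => ?_
  -- `Λ = |(f^ℓ)'(p)| e^(ℓε)` satisfies `(1/ℓ) log Λ = χ_p + ε`.
  have hΛ : |deriv f^[ℓ] p| < |deriv f^[ℓ] p| * Real.exp (ℓ * ε) :=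
    lt_mul_of_one_lt_right (by linarith) (Real.one_lt_exp_iff.2 (by positivity))
  obtain ⟨δ, hδ, hbranch⟩ :=
    exists_isCoveringBranch_closedBall ((hf.iterate ℓ).of_le (by norm_num)) hper hrep hΛ
  obtain ⟨m, hm⟩ := hexact (ball p δ) isOpen_ball ⟨p, mem_ball_self hδ, hp⟩
  have hsurj := surjOn_of_exact (not_subsingleton_iff.1 hJfnt) hmaps hexact
  obtain ⟨c, hc, hlow⟩ := exists_pos_le_pow_mul_pullbackDiamSup hf.continuous hℓ (by linarith)
    hbranch (convex_closedBall p δ).ordConnected isOpen_ball ball_subset_closedBall hJoc hJ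
    (fun j => Function.iterate_add f j m ▸
      ((hsurj.iterate j).comp (hm ▸ surjOn_image _ _)).mono inter_subset_left hJI) hbdd
  have := neg_inv_mul_log_le_liminf hc (by linarith) (fun _ => pullbackDiamSup_nonneg)
    (fun n => (pullbackDiamSup_le_diam (hbdd n)).trans (diam_mono (hpre n) (isBounded_Icc a b)))
    hlow
  rw [Real.log_mul (by positivity) (Real.exp_pos _).ne', Real.log_exp, mul_add] at this
  have hℓε : 1 / (ℓ : ℝ) * (ℓ * ε) = ε := by field_simp
  linarith

/-- Let `f` be a `C³` interval map with non-flat critical points, whose Julia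
set `Jf` is completely invariant, and which is topologically exact on `Jf`.  If `p ∈ Jf` is
a hyperbolic repelling periodic point of period `ℓ`, then for every interval `J`
intersecting `Jf`,
`liminf (1/n) ln max{|W| : W component of f^{-n}(J)} ≥ -χ_p(f)`. -/
theorem liminf_component_diam_ge_neg_periodic_exponent
    (a b : ℝ) (hab : a < b) (f : ℝ → ℝ)
    (hf : ContDiff ℝ 3 f) (hmaps : MapsTo f (Icc a b) (Icc a b))
    (hnonflat : ∀ c ∈ Icc a b, deriv f c = 0 → ∃ k : ℕ, 2 ≤ k ∧ iteratedDeriv k f c ≠ 0)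
    (Jf : Set ℝ) (hJfI : Jf ⊆ Icc a b) (hJfinv : f ⁻¹' Jf = Jf)
    (hJfnt : ¬ Jf.Subsingleton)
    (hexact : ∀ U : Set ℝ, IsOpen U → (U ∩ Jf).Nonempty →
      ∃ n : ℕ, f^[n] '' (U ∩ Icc a b) = Jf)
    (p : ℝ) (hp : p ∈ Jf) (ℓ : ℕ) (hℓ : 1 ≤ ℓ) (hper : f^[ℓ] p = p)
    (hrep : 1 < |deriv (f^[ℓ]) p|) :
    ∀ J : Set ℝ, J ⊆ Icc a b → J.OrdConnected → (J ∩ Jf).Nonempty →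
      -( (1 / (ℓ : ℝ)) * Real.log |deriv (f^[ℓ]) p| ) ≤
        Filter.liminf (fun n : ℕ => (1 / (n : ℝ)) * Real.log (pullbackDiamSup f J n))
          Filter.atTop :=
  liminf_component_diam_ge_neg_periodic_exponent_general a b f hf hmaps hnonflat Jf hJfI hJfinv
    hJfnt hexact p hp ℓ hℓ hper hrep
end

section
/- Let f : I → I be a continuously differentiable interval map and ν an ergodic f-invariant probability measure with finite Lyapunov exponent χ_ν(f) = ∫ ln|Df| dν ≥ 0. Assume there is C₀ > 0 with |Df(x)| ≤ C₀ dist(x, Crit(f)) for all x. Then for every ε > 0 there is a point x in J := supp(ν) such that for every sufficiently large n: f^n(B(x, exp(−(χ_ν(f) + 2ε)n))) ⊆ B(f^n(x), exp(−εn)). -/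
/-!
Fix `δ > 0` so small that `g = log (|f'| + δ)` (kept at the junk value `log 0 = 0` on critical
points) still has `∫ g dν < χ + ε/2`. By uniform continuity of `f'` near `[a, b]` there is
`ρ > 0` such that `f` is `exp (g p)`-Lipschitz on `B(p, ρ)` for every `p ∈ [a, b]`. For a
`ν`-typical `x`, the one-sided Birkhoff theorem (derived from the maximal ergodic theorem) gives
`S_k g (x) ≤ B + (χ + ε/2) k`, so the ball of radius `exp (-(χ + 2ε) n)` around `x` is carried
along the first `n` steps of the orbit inside balls of radius at most `exp (B - 3εn/2)`; for
large `n` these stay below `ρ`, and the last one has radius at most `exp (-εn)`.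
-/

open MeasureTheory Metric Set Filter

/-- The (topological) support of a Borel measure on `ℝ`. -/
def measureSupport (ν : MeasureTheory.Measure ℝ) : Set ℝ :=
  {y | ∀ U : Set ℝ, IsOpen U → y ∈ U → 0 < ν U}

open Topology

lemma measureSupport_eq_support (ν : Measure ℝ) : measureSupport ν = ν.support := by
  rw [Measure.support_eq_forall_isOpen]
  ext y
  exact ⟨fun h U hy hU => h U hU hy, fun h U hU hy => h U hy hU⟩

lemma ae_mem_measureSupport (ν : Measure ℝ) : ∀ᵐ x ∂ν, x ∈ measureSupport ν :=
  measureSupport_eq_support ν ▸ ν.support_mem_ae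

section BirkhoffSum

variable {α : Type*} {f : α → α} {φ : α → ℝ}

noncomputable def birkhoffMax (f : α → α) (φ : α → ℝ) (N : ℕ) (x : α) : ℝ :=
  (Finset.range (N + 1)).sup' Finset.nonempty_range_add_one fun k => birkhoffSum f φ k x

lemma birkhoffSum_le_birkhoffMax {k N : ℕ} (hk : k ≤ N) (x : α) :
    birkhoffSum f φ k x ≤ birkhoffMax f φ N x :=
  Finset.le_sup' (fun k => birkhoffSum f φ k x) (Finset.mem_range_succ_iff.2 hk)

lemma birkhoffMax_nonneg (N : ℕ) (x : α) : 0 ≤ birkhoffMax f φ N x := by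
  simpa using birkhoffSum_le_birkhoffMax (f := f) (φ := φ) (Nat.zero_le N) x

lemma birkhoffMax_mono {N N' : ℕ} (h : N ≤ N') (x : α) :
    birkhoffMax f φ N x ≤ birkhoffMax f φ N' x :=
  Finset.sup'_le _ _ fun _ hk =>
    birkhoffSum_le_birkhoffMax ((Finset.mem_range_succ_iff.1 hk).trans h) x

lemma birkhoffMax_le_max_zero_add (N : ℕ) (x : α) :
    birkhoffMax f φ N x ≤ max 0 (φ x + birkhoffMax f φ N (f x)) := by
  refine Finset.sup'_le _ _ fun k hk => ?_
  rcases k with _ | k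
  · simp
  · rw [birkhoffSum_succ']
    have hk : k ≤ N := by have := Finset.mem_range_succ_iff.1 hk; omega
    exact le_max_of_le_right (by gcongr; exact birkhoffSum_le_birkhoffMax hk _)

lemma birkhoffMax_le_birkhoffSum_abs (N : ℕ) (x : α) :
    birkhoffMax f φ N x ≤ birkhoffSum f (fun y => |φ y|) N x := by
  refine Finset.sup'_le _ _ fun k hk => ?_
  have hk : k ≤ N := Finset.mem_range_succ_iff.1 hk
  calc birkhoffSum f φ k x ≤ birkhoffSum f (fun y => |φ y|) k x :=
        Finset.sum_le_sum fun i _ => le_abs_self _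
    _ ≤ birkhoffSum f (fun y => |φ y|) N x :=
        Finset.sum_le_sum_of_subset_of_nonneg (Finset.range_subset_range.2 hk)
          fun i _ _ => abs_nonneg _

lemma bddAbove_range_birkhoffSum_apply_iff (x : α) :
    BddAbove (range fun n => birkhoffSum f φ n (f x)) ↔
      BddAbove (range fun n => birkhoffSum f φ n x) := by
  constructor
  · rintro ⟨C, hC⟩
    refine ⟨max 0 (φ x + C), forall_mem_range.2 fun n => ?_⟩
    rcases n with _ | n
    · simp
    · rw [birkhoffSum_succ']
      exact le_max_of_le_right (by gcongr; exact hC (mem_range_self n))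
  · rintro ⟨C, hC⟩
    refine ⟨C - φ x, forall_mem_range.2 fun n => ?_⟩
    have := hC (mem_range_self (n + 1))
    rw [birkhoffSum_succ'] at this
    linarith

variable [MeasurableSpace α] {μ : Measure α}

lemma measurable_birkhoffSum (hf : Measurable f) (hφ : Measurable φ) (n : ℕ) :
    Measurable (birkhoffSum f φ n) :=
  Finset.measurable_sum _ fun k _ => hφ.comp (hf.iterate k)

lemma measurable_birkhoffMax (hf : Measurable f) (hφ : Measurable φ) (N : ℕ) :
    Measurable (birkhoffMax f φ N) :=
  Finset.measurable_range_sup'' fun k _ => measurable_birkhoffSum hf hφ k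

lemma integrable_birkhoffSum (hf : MeasurePreserving f μ μ) (hφ : Integrable φ μ) (n : ℕ) :
    Integrable (birkhoffSum f φ n) μ :=
  integrable_finsetSum _ fun k _ => (hf.iterate k).integrable_comp_of_integrable hφ

lemma integrable_birkhoffMax (hf : MeasurePreserving f μ μ) (hφm : Measurable φ)
    (hφ : Integrable φ μ) (N : ℕ) : Integrable (birkhoffMax f φ N) μ := by
  refine (integrable_birkhoffSum hf hφ.abs N).mono'
    (measurable_birkhoffMax hf.measurable hφm N).aestronglyMeasurable (ae_of_all _ fun x => ?_)
  rw [Real.norm_of_nonneg (birkhoffMax_nonneg N x)]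
  exact birkhoffMax_le_birkhoffSum_abs N x

/-- Garsia's argument: on `E = {M > 0}` one has `M - M ∘ f ≤ φ`, while `∫ (M - M ∘ f) = 0` and
`M - M ∘ f ≤ 0` off `E`. -/
theorem setIntegral_birkhoffMax_pos_nonneg (hf : MeasurePreserving f μ μ) (hφm : Measurable φ)
    (hφ : Integrable φ μ) (N : ℕ) : 0 ≤ ∫ x in {x | 0 < birkhoffMax f φ N x}, φ x ∂μ := by
  set M := birkhoffMax f φ N
  set E := {x | 0 < M x}
  have hMm : Measurable M := measurable_birkhoffMax hf.measurable hφm N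
  have hMi : Integrable M μ := integrable_birkhoffMax hf hφm hφ N
  have hMfi : Integrable (fun x => M (f x)) μ := hf.integrable_comp_of_integrable hMi
  have hE : MeasurableSet E := measurableSet_lt measurable_const hMm
  have h_on_E : ∀ x ∈ E, M x - M (f x) ≤ φ x := fun x hx => by
    have := (le_max_iff.1 (birkhoffMax_le_max_zero_add N x)).resolve_left (not_le.2 hx)
    linarith
  have h_off_E : ∀ x ∈ Eᶜ, M x - M (f x) ≤ 0 := fun x hx => by
    have := birkhoffMax_nonneg (f := f) (φ := φ) N (f x)
    linarith [not_lt.1 (show ¬0 < M x from hx)]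
  have h_zero : ∫ x, (M x - M (f x)) ∂μ = 0 := by
    rw [integral_sub hMi hMfi, ← integral_map hf.measurable.aemeasurable hMm.aestronglyMeasurable,
      hf.map_eq, sub_self]
  have hi : Integrable (fun x => M x - M (f x)) μ := hMi.sub hMfi
  calc 0 = ∫ x in E, (M x - M (f x)) ∂μ + ∫ x in Eᶜ, (M x - M (f x)) ∂μ := by
        rw [integral_add_compl hE hi, h_zero]
    _ ≤ ∫ x in E, φ x ∂μ + 0 :=
        add_le_add (setIntegral_mono_on hi.integrableOn hφ.integrableOn hE h_on_E)
          (setIntegral_nonpos hE.compl h_off_E)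
    _ = ∫ x in E, φ x ∂μ := add_zero _

/-- The set where the Birkhoff sums stay bounded above is invariant, so by ergodicity it is null
or conull; if it were null, the maximal ergodic theorem would force `∫ φ ≥ 0`. -/
theorem Ergodic.ae_bddAbove_range_birkhoffSum (herg : Ergodic f μ) (hφm : Measurable φ)
    (hφ : Integrable φ μ) (hneg : ∫ x, φ x ∂μ < 0) :
    ∀ᵐ x ∂μ, BddAbove (range fun n => birkhoffSum f φ n x) := by
  have hfm : Measurable f := herg.measurable
  have hB : MeasurableSet {x | BddAbove (range fun n => birkhoffSum f φ n x)} :=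
    measurableSet_bddAbove_range (measurable_birkhoffSum hfm hφm)
  refine (herg.toPreErgodic.ae_mem_or_ae_notMem hB
    (Set.ext bddAbove_range_birkhoffSum_apply_iff)).resolve_right fun h_unbdd => hneg.not_ge ?_
  set E : ℕ → Set α := fun N => {x | 0 < birkhoffMax f φ N x}
  have hEm : ∀ N, MeasurableSet (E N) := fun N =>
    measurableSet_lt measurable_const (measurable_birkhoffMax hfm hφm N)
  have hE_mono : Monotone E := fun N N' h x hx => hx.trans_le (birkhoffMax_mono h x)
  have h_cover : ∀ᵐ x ∂μ, x ∈ ⋃ N, E N := by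
    filter_upwards [h_unbdd] with x hx
    obtain ⟨_, ⟨n, rfl⟩, hn⟩ := not_bddAbove_iff.1 hx 0
    exact mem_iUnion.2 ⟨n, hn.trans_le (birkhoffSum_le_birkhoffMax le_rfl x)⟩
  have h_lim := tendsto_setIntegral_of_monotone hEm hE_mono hφ.integrableOn
  rw [setIntegral_eq_integral_of_ae_compl_eq_zero
    (h_cover.mono fun x hx hx' => absurd hx hx')] at h_lim
  exact ge_of_tendsto' h_lim fun N =>
    setIntegral_birkhoffMax_pos_nonneg herg.toMeasurePreserving hφm hφ N

theorem Ergodic.ae_exists_birkhoffSum_le [IsProbabilityMeasure μ] (herg : Ergodic f μ)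
    (hφm : Measurable φ) (hφ : Integrable φ μ) {c : ℝ} (hc : ∫ x, φ x ∂μ < c) :
    ∀ᵐ x ∂μ, ∃ B, ∀ n, birkhoffSum f φ n x ≤ B + c * n := by
  have hneg : ∫ x, (φ x - c) ∂μ < 0 := by
    rw [integral_sub hφ (integrable_const c), integral_const, probReal_univ, one_smul]
    linarith
  filter_upwards [herg.ae_bddAbove_range_birkhoffSum (hφm.sub_const c)
    (hφ.sub (integrable_const c)) hneg] with x ⟨B, hB⟩
  refine ⟨B, fun n => ?_⟩
  have h_shift : birkhoffSum f (fun y => φ y - c) n x = birkhoffSum f φ n x - n * c := by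
    simp [birkhoffSum, Finset.sum_sub_distrib]
  linarith [hB (mem_range_self n)]

end BirkhoffSum

lemma Real.log_add_one_le_log_two_add_abs_log {t : ℝ} (ht : 0 ≤ t) :
    Real.log (t + 1) ≤ Real.log 2 + |Real.log t| := by
  rcases le_total t 1 with h | h
  · have := Real.log_le_log (by positivity) (show t + 1 ≤ 2 by linarith)
    linarith [abs_nonneg (Real.log t)]
  · calc Real.log (t + 1) ≤ Real.log (2 * t) := Real.log_le_log (by positivity) (by linarith)
      _ = Real.log 2 + Real.log t := Real.log_mul two_ne_zero (by positivity)
      _ ≤ Real.log 2 + |Real.log t| := by gcongr; exact le_abs_self _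

lemma Real.log_le_log_add_one {t : ℝ} (ht : 0 ≤ t) : Real.log t ≤ Real.log (t + 1) := by
  rcases ht.eq_or_lt with rfl | ht
  · simp
  · exact Real.log_le_log ht (by linarith)

section LogApproximation

variable {α : Type*} [MeasurableSpace α] {μ : Measure α} {d : α → ℝ}

/-- The maximum only matters at `t = 0`, where it replaces `log δ → -∞` by the junk value
`log 0 = 0`. -/
lemma tendsto_max_log_add_log {t : ℝ} (ht : 0 ≤ t) :
    Tendsto (fun δ => max (Real.log (t + δ)) (Real.log t)) (𝓝[>] 0) (𝓝 (Real.log t)) := by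
  rcases ht.eq_or_lt with rfl | ht
  · refine tendsto_const_nhds.congr' ?_
    filter_upwards [Ioc_mem_nhdsGT one_pos] with δ hδ
    simp [Real.log_nonpos hδ.1.le hδ.2]
  · refine tendsto_nhdsWithin_of_tendsto_nhds ?_
    have h := ((Real.continuousAt_log (by positivity : t + 0 ≠ 0)).comp
      (continuousAt_const.add continuousAt_id)).max (continuousAt_const (y := Real.log t))
    simpa using h

lemma abs_max_log_add_log_le {t δ : ℝ} (ht : 0 ≤ t) (hδ : δ ∈ Ioc (0 : ℝ) 1) :
    |max (Real.log (t + δ)) (Real.log t)| ≤ |Real.log t| + Real.log (t + 1) := by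
  have h_upper : Real.log (t + δ) ≤ Real.log (t + 1) :=
    Real.log_le_log (by linarith [hδ.1]) (by linarith [hδ.2])
  have h_one := Real.log_le_log_add_one ht
  have h_nonneg : 0 ≤ Real.log (t + 1) := Real.log_nonneg (by linarith)
  rw [abs_le]
  constructor
  · linarith [neg_abs_le (Real.log t), le_max_right (Real.log (t + δ)) (Real.log t)]
  · linarith [max_le h_upper h_one, abs_nonneg (Real.log t)]

lemma integrable_log_add_one [IsFiniteMeasure μ] (hd : Measurable d) (hd0 : ∀ x, 0 ≤ d x)
    (hlog : Integrable (fun x => Real.log (d x)) μ) :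
    Integrable (fun x => Real.log (d x + 1)) μ := by
  refine ((integrable_const (Real.log 2)).add hlog.abs).mono'
    (Real.measurable_log.comp (hd.add_const 1)).aestronglyMeasurable (ae_of_all _ fun x => ?_)
  rw [Real.norm_of_nonneg (Real.log_nonneg (by linarith [hd0 x]))]
  exact Real.log_add_one_le_log_two_add_abs_log (hd0 x)

lemma exists_pos_integral_max_log_add_lt [IsFiniteMeasure μ] (hd : Measurable d)
    (hd0 : ∀ x, 0 ≤ d x) (hlog : Integrable (fun x => Real.log (d x)) μ) {c : ℝ}
    (hc : ∫ x, Real.log (d x) ∂μ < c) :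
    ∃ δ > 0, Integrable (fun x => max (Real.log (d x + δ)) (Real.log (d x))) μ ∧
      ∫ x, max (Real.log (d x + δ)) (Real.log (d x)) ∂μ < c := by
  have h_meas : ∀ δ, Measurable fun x => max (Real.log (d x + δ)) (Real.log (d x)) := fun δ =>
    (Real.measurable_log.comp (hd.add_const δ)).max (Real.measurable_log.comp hd)
  have h_bound_int := hlog.abs.add (integrable_log_add_one hd hd0 hlog)
  have h_bound : ∀ᶠ δ in 𝓝[>] (0 : ℝ), ∀ x,
      ‖max (Real.log (d x + δ)) (Real.log (d x))‖ ≤ |Real.log (d x)| + Real.log (d x + 1) := by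
    filter_upwards [Ioc_mem_nhdsGT one_pos] with δ hδ x
    exact abs_max_log_add_log_le (hd0 x) hδ
  have h_lim := tendsto_integral_filter_of_dominated_convergence _
    (Eventually.of_forall fun δ => (h_meas δ).aestronglyMeasurable)
    (h_bound.mono fun δ h => ae_of_all _ h) h_bound_int
    (ae_of_all _ fun x => tendsto_max_log_add_log (hd0 x))
  obtain ⟨δ, ⟨h_int_lt, h_bdd⟩, hδ⟩ :=
    ((h_lim.eventually (gt_mem_nhds hc)).and h_bound |>.and self_mem_nhdsWithin).exists
  exact ⟨δ, hδ, h_bound_int.mono' (h_meas δ).aestronglyMeasurable (ae_of_all _ h_bdd), h_int_lt⟩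

end LogApproximation

lemma IsCompact.exists_pos_forall_dist_image_le {f : ℝ → ℝ} (hf : ContDiff ℝ 1 f) {K : Set ℝ}
    (hK : IsCompact K) {δ : ℝ} (hδ : 0 < δ) :
    ∃ ρ > 0, ∀ p ∈ K, ∀ y ∈ ball p ρ, ∀ z ∈ ball p ρ,
      dist (f y) (f z) ≤ (|deriv f p| + δ) * dist y z := by
  have hdc : Continuous (deriv f) := hf.continuous_deriv le_rfl
  obtain ⟨ρ, hρ, h_close⟩ := Metric.mem_uniformity_dist.1
    (hK.uniformContinuousAt_of_continuousAt (deriv f) (fun p _ => hdc.continuousAt)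
      (Metric.dist_mem_uniformity hδ))
  refine ⟨ρ, hρ, fun p hp y hy z hz => ?_⟩
  have h_deriv : ∀ w ∈ ball p ρ, ‖deriv f w‖ ≤ |deriv f p| + δ := fun w hw => by
    have h : dist (deriv f p) (deriv f w) < δ := h_close (mem_ball'.1 hw) hp
    rw [Real.dist_eq, abs_sub_comm] at h
    rw [Real.norm_eq_abs]
    linarith [abs_sub_abs_le_abs_sub (deriv f w) (deriv f p)]
  simpa [Real.dist_eq] using (convex_ball p ρ).norm_image_sub_le_of_norm_deriv_le
    (fun w _ => (hf.differentiable one_ne_zero).differentiableAt) h_deriv hz hy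

theorem image_iterate_ball_subset {X : Type*} [PseudoMetricSpace X] {F : X → X} {K : Set X}
    {ρ : ℝ} {g : X → ℝ}
    (hF : ∀ p ∈ K, ∀ y ∈ ball p ρ, ∀ z ∈ ball p ρ, dist (F y) (F z) ≤ Real.exp (g p) * dist y z)
    {x : X} {r : ℝ} {n : ℕ} (h_orbit : ∀ k < n, F^[k] x ∈ K)
    (h_radius : ∀ k < n, r * Real.exp (birkhoffSum F g k x) ≤ ρ) :
    F^[n] '' ball x r ⊆ ball (F^[n] x) (r * Real.exp (birkhoffSum F g n x)) := by
  induction n with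
  | zero => simp
  | succ n ih =>
    rintro _ ⟨y, hy, rfl⟩
    have hyn : dist (F^[n] y) (F^[n] x) < r * Real.exp (birkhoffSum F g n x) :=
      ih (fun k hk => h_orbit k (by omega)) (fun k hk => h_radius k (by omega)) ⟨y, hy, rfl⟩
    have h_in : F^[n] y ∈ ball (F^[n] x) ρ := hyn.trans_le (h_radius n n.lt_succ_self)
    rw [mem_ball, Function.iterate_succ_apply', Function.iterate_succ_apply', birkhoffSum_succ,
      Real.exp_add]
    calc dist (F (F^[n] y)) (F (F^[n] x))
        ≤ Real.exp (g (F^[n] x)) * dist (F^[n] y) (F^[n] x) :=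
          hF _ (h_orbit n n.lt_succ_self) _ h_in _ (mem_ball_self (dist_nonneg.trans_lt h_in))
      _ < Real.exp (g (F^[n] x)) * (r * Real.exp (birkhoffSum F g n x)) := by gcongr
      _ = r * (Real.exp (birkhoffSum F g n x) * Real.exp (g (F^[n] x))) := by ring

lemma exists_integral_lt_and_forall_dist_image_le_exp {f : ℝ → ℝ} (hf : ContDiff ℝ 1 f)
    {K : Set ℝ} (hK : IsCompact K) {μ : Measure ℝ} [IsFiniteMeasure μ]
    (hint : Integrable (fun x => Real.log |deriv f x|) μ) {c : ℝ}
    (hc : ∫ x, Real.log |deriv f x| ∂μ < c) :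
    ∃ g : ℝ → ℝ, Measurable g ∧ Integrable g μ ∧ ∫ x, g x ∂μ < c ∧ ∃ ρ > 0, ∀ p ∈ K,
      ∀ y ∈ ball p ρ, ∀ z ∈ ball p ρ, dist (f y) (f z) ≤ Real.exp (g p) * dist y z := by
  have hdm : Measurable fun x => |deriv f x| := (hf.continuous_deriv le_rfl).measurable.abs
  obtain ⟨δ, hδ, hg_int, hg_lt⟩ :=
    exists_pos_integral_max_log_add_lt hdm (fun x => abs_nonneg _) hint hc
  obtain ⟨ρ, hρ, h_lip⟩ := hK.exists_pos_forall_dist_image_le hf hδ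
  have h_factor : ∀ p, |deriv f p| + δ ≤ Real.exp (max (Real.log (|deriv f p| + δ))
      (Real.log |deriv f p|)) := fun p => by
    calc |deriv f p| + δ = Real.exp (Real.log (|deriv f p| + δ)) := by
          rw [Real.exp_log (by positivity)]
      _ ≤ _ := Real.exp_le_exp.2 (le_max_left _ _)
  exact ⟨_, (Real.measurable_log.comp (hdm.add_const δ)).max (Real.measurable_log.comp hdm),
    hg_int, hg_lt, ρ, hρ, fun p hp y hy z hz =>
      (h_lip p hp y hy z hz).trans (mul_le_mul_of_nonneg_right (h_factor p) dist_nonneg)⟩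

lemma eventually_forall_exp_mul_exp_le_min {s : ℕ → ℝ} {B χ ε ρ : ℝ}
    (hs : ∀ k, s k ≤ B + (χ + ε / 2) * k) (hχ : 0 ≤ χ) (hε : 0 < ε) (hρ : 0 < ρ) :
    ∀ᶠ n : ℕ in atTop, ∀ k ≤ n,
      Real.exp (-(χ + 2 * ε) * n) * Real.exp (s k) ≤ min ρ (Real.exp (-ε * n)) := by
  filter_upwards [(tendsto_natCast_atTop_atTop.const_mul_atTop (half_pos hε)).eventually_ge_atTop
    (B - min (Real.log ρ) 0)] with n hn k hk
  have h_growth := mul_le_mul_of_nonneg_left (Nat.cast_le.2 hk : (k : ℝ) ≤ n)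
    (by linarith : 0 ≤ χ + ε / 2)
  have hεn : 0 ≤ ε * n := by positivity
  rw [← Real.exp_add]
  refine le_min ?_ (Real.exp_le_exp.2 ?_)
  · rw [← Real.exp_log hρ, Real.exp_le_exp]
    linarith [hs k, min_le_left (Real.log ρ) 0]
  · linarith [hs k, min_le_right (Real.log ρ) 0]

theorem exponentially_small_disk_estimate_general
    (a b : ℝ) (f : ℝ → ℝ)
    (hf : ContDiff ℝ 1 f)
    (ν : Measure ℝ) (hprob : IsProbabilityMeasure ν) (hsupp : ν (Icc a b)ᶜ = 0)
    (herg : Ergodic f ν)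
    (hint : Integrable (fun x => Real.log |deriv f x|) ν)
    (χ : ℝ) (hχdef : χ = ∫ x, Real.log |deriv f x| ∂ν) (hχ : 0 ≤ χ) :
    ∀ ε > (0 : ℝ), ∃ x ∈ measureSupport ν, ∃ N : ℕ, ∀ n : ℕ, N ≤ n →
      f^[n] '' Metric.ball x (Real.exp (-(χ + 2 * ε) * n)) ⊆
        Metric.ball (f^[n] x) (Real.exp (-ε * n)) := by
  intro ε hε
  obtain ⟨g, hgm, hg_int, hg_lt, ρ, hρ, h_lip⟩ :=
    exists_integral_lt_and_forall_dist_image_le_exp hf isCompact_Icc hint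
      (c := χ + ε / 2) (by linarith)
  have h_orbit : ∀ᵐ x ∂ν, ∀ k, f^[k] x ∈ Icc a b := ae_all_iff.2 fun k =>
    (herg.toMeasurePreserving.iterate k).quasiMeasurePreserving.ae (ae_iff.2 hsupp)
  obtain ⟨x, ⟨B, hB⟩, hx_orbit, hx_supp⟩ :=
    ((herg.ae_exists_birkhoffSum_le hgm hg_int hg_lt).and
      (h_orbit.and (ae_mem_measureSupport ν))).exists
  obtain ⟨N, hN⟩ := eventually_atTop.1 (eventually_forall_exp_mul_exp_le_min hB hχ hε hρ)
  exact ⟨x, hx_supp, N, fun n hn => (image_iterate_ball_subset h_lip (fun k _ => hx_orbit k)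
    fun k hk => (hN n hn k hk.le).trans (min_le_left _ _)).trans
      (ball_subset_ball ((hN n hn n le_rfl).trans (min_le_right _ _)))⟩

/-- For a continuously differentiable interval map `f`, an ergodic invariant
probability measure `ν` with finite non-negative Lyapunov exponent `χ_ν(f) = ∫ ln|Df| dν`,
and assuming `|Df(x)| ≤ C₀ dist(x, Crit f)`, for every `ε > 0` there is a point `x` in the
support of `ν` such that for all sufficiently large `n`,
`f^n(B(x, exp(-(χ_ν + 2ε)n))) ⊆ B(f^n(x), exp(-εn))`. -/
theorem exponentially_small_disk_estimate
    (a b : ℝ) (hab : a < b) (f : ℝ → ℝ)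
    (hf : ContDiff ℝ 1 f) (hmaps : MapsTo f (Icc a b) (Icc a b))
    (ν : Measure ℝ) (hprob : IsProbabilityMeasure ν) (hsupp : ν (Icc a b)ᶜ = 0)
    (herg : Ergodic f ν)
    (hint : Integrable (fun x => Real.log |deriv f x|) ν)
    (χ : ℝ) (hχdef : χ = ∫ x, Real.log |deriv f x| ∂ν) (hχ : 0 ≤ χ)
    (C₀ : ℝ) (hC₀ : 0 < C₀)
    (hbound : ∀ x ∈ Icc a b, |deriv f x| ≤ C₀ * Metric.infDist x {y | deriv f y = 0}) :
    ∀ ε > (0 : ℝ), ∃ x ∈ measureSupport ν, ∃ N : ℕ, ∀ n : ℕ, N ≤ n →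
      f^[n] '' Metric.ball x (Real.exp (-(χ + 2 * ε) * n)) ⊆
        Metric.ball (f^[n] x) (Real.exp (-ε * n)) :=
  exponentially_small_disk_estimate_general a b f hf ν hprob hsupp herg hint χ hχdef hχ
end
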